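/- Let C be an (n,k,r,4)_seq code, let B_0 be the span in C⊥ of all dual codewords of weight ≤ r+1, and let m = dim(B_0). Then 3n ≤ m·(3r/2 + 2 − (r−2)/(2(r+1))). -/

import Mathlib

open Finset

/-- Hamming weight of a vector. -/
def wt {ι : Type*} [Fintype ι] {F : Type*} [Field F] [DecidableEq F] (v : ι → F) : ℕ :=
  (Finset.univ.filter (fun i => v i ≠ 0)).card

/-- Sequential recovery from `t` erasures with locality `r`. -/
def SeqRecov {n : ℕ} {F : Type*} [Field F] [DecidableEq F]
    (C : Submodule F (Fin n → F)) (r t : ℕ) : Prop :=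
  ∀ E : Finset (Fin n), E.card ≤ t →
    ∃ σ : List (Fin n), σ.Nodup ∧ σ.toFinset = E ∧
      ∀ j : Fin σ.length, ∃ h : Fin n → F,
        (∀ c ∈ C, ∑ i, h i * c i = 0) ∧ wt h ≤ r + 1 ∧ h (σ.get j) ≠ 0 ∧
        ∀ j' : Fin σ.length, (j : ℕ) < (j' : ℕ) → h (σ.get j') = 0

/-!
Take a basis `V` of `B₀` made of dual codewords of weight `≤ r + 1` and view it as the rows of a
parity-check matrix; `T i` is the set of rows that are nonzero at coordinate `i`. By sequential
recovery, the coordinate functionals at any `≤ 4` positions are linearly independent on `B₀`, and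
those at `E` factor through the rows `⋃ i ∈ E, T i`, so `T` satisfies Hall's condition for up to
four columns. The rest is double counting: every row meets at most `r + 1` columns and every
column at least two rows, except the singleton columns. Hall's condition keeps the rows that carry
a singleton column away from other short columns, which is enough to pay for the singletons and
gives `2n(r + 1) ≤ |V|((r + 1)² + 1)`.
-/

section Hall

variable {ι R : Type*}

def HallUpTo [DecidableEq R] (T : ι → Finset R) (k : ℕ) : Prop :=
  ∀ E : Finset ι, #E ≤ k → #E ≤ #(E.biUnion T)

def singletonCols [Fintype ι] (T : ι → Finset R) : Finset ι := {i | #(T i) = 1}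

lemma mem_singletonCols [Fintype ι] {T : ι → Finset R} {i : ι} :
    i ∈ singletonCols T ↔ #(T i) = 1 := by
  simp [singletonCols]

variable [DecidableEq R]

def singletonRows [Fintype ι] (T : ι → Finset R) : Finset R := (singletonCols T).biUnion T

lemma sum_card_filter_mem_eq_sum_card_inter [Fintype ι] (T : ι → Finset R) (S : Finset R) :
    ∑ s ∈ S, #{i | s ∈ T i} = ∑ i, #(T i ∩ S) := by
  refine (sum_card_bipartiteAbove_eq_sum_card_bipartiteBelow (t := univ)
    (fun s i => s ∈ T i)).trans (sum_congr rfl fun i _ => ?_)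
  rw [bipartiteBelow, filter_mem_eq_inter, inter_comm]

namespace HallUpTo

variable {T : ι → Finset R}

lemma mono {k l : ℕ} (hall : HallUpTo T l) (hkl : k ≤ l) : HallUpTo T k :=
  fun E hE => hall E (hE.trans hkl)

lemma nonempty (hall : HallUpTo T 1) (i : ι) : (T i).Nonempty := by
  simpa using hall {i} (by simp)

variable [Fintype ι]

lemma sum_card_add_card_singletonCols (hall : HallUpTo T 1) :
    ∑ i, #(T i) + #(singletonCols T) = 2 * Fintype.card ι + ∑ i, (#(T i) - 2) := by
  have hcol : ∀ i, #(T i) + (if #(T i) = 1 then 1 else 0) = 2 + (#(T i) - 2) := fun i => by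
    have := (hall.nonempty i).card_pos
    split_ifs <;> omega
  rw [singletonCols, card_filter, ← sum_add_distrib, sum_congr rfl fun i _ => hcol i,
    sum_add_distrib, sum_const, card_univ, smul_eq_mul, mul_comm]

lemma pairwiseDisjoint_singletonCols (hall : HallUpTo T 2) :
    (singletonCols T : Set ι).PairwiseDisjoint T := by
  classical
  intro i hi j hj hij
  refine disjoint_left.mpr fun s hsi hsj => ?_
  rw [mem_coe, mem_singletonCols, card_eq_one] at hi hj
  obtain ⟨a, ha⟩ := hi
  obtain ⟨b, hb⟩ := hj
  rw [ha, mem_singleton] at hsi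
  rw [hb, mem_singleton] at hsj
  have := hall {i, j} (by simp [card_le_two])
  simp [card_pair hij, ha, hb, ← hsi, ← hsj] at this

lemma card_biUnion_of_subset_singletonCols (hall : HallUpTo T 2) {P : Finset ι}
    (hP : P ⊆ singletonCols T) : #(P.biUnion T) = #P := by
  rw [card_biUnion ((pairwiseDisjoint_singletonCols hall).subset (by simpa using hP)),
    card_eq_sum_ones]
  exact sum_congr rfl fun i hi => mem_singletonCols.mp (hP hi)

/-- Each row of `S` comes with its own singleton column, so these columns may be added to `D`. -/
lemma card_add_card_le {k : ℕ} (hall : HallUpTo T k) (hk : 2 ≤ k) {D : Finset ι}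
    (hD : ∀ i ∈ D, #(T i) ≠ 1) {S : Finset R} (hS : S ⊆ singletonRows T)
    (hcard : #D + #S ≤ k) : #D + #S ≤ #(D.biUnion T ∪ S) := by
  classical
  set P := {j ∈ singletonCols T | T j ⊆ S}
  have hPS : P.biUnion T = S := by
    refine subset_antisymm (biUnion_subset.mpr fun j hj => (mem_filter.mp hj).2) fun s hs => ?_
    obtain ⟨j, hj, hsj⟩ := mem_biUnion.mp (hS hs)
    obtain ⟨a, ha⟩ := card_eq_one.mp (mem_singletonCols.mp hj)
    rw [ha, mem_singleton] at hsj
    subst hsj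
    exact mem_biUnion.mpr ⟨j, mem_filter.mpr ⟨hj, by simpa [ha] using hs⟩, by simp [ha]⟩
  have hP : #P = #S := by
    rw [← hPS, card_biUnion_of_subset_singletonCols (hall.mono hk) (filter_subset _ _)]
  have hDP : Disjoint D P := disjoint_left.mpr fun i hiD hiP =>
    hD i hiD (mem_singletonCols.mp (mem_filter.mp hiP).1)
  have := hall (D ∪ P) (by rw [card_union_of_disjoint hDP]; omega)
  rwa [card_union_of_disjoint hDP, union_biUnion, hPS, hP] at this

lemma not_subset_singletonRows (hall : HallUpTo T 4) {i : ι} (h2 : 2 ≤ #(T i))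
    (h3 : #(T i) ≤ 3) : ¬ T i ⊆ singletonRows T := fun hsub => by
  have := hall.card_add_card_le (by norm_num) (D := {i})
    (by simp only [mem_singleton, forall_eq]; omega) hsub
    (by rw [card_singleton]; omega)
  simp at this

lemma card_inter_singletonRows_lt (hall : HallUpTo T 4) {i : ι} (h2 : 2 ≤ #(T i))
    (h3 : #(T i) ≤ 3) : #(T i ∩ singletonRows T) < #(T i) :=
  card_lt_card ⟨inter_subset_left, fun h => not_subset_singletonRows hall h2 h3
    fun _ hx => (mem_inter.mp (h hx)).2⟩

lemma card_sdiff_singletonRows_eq_one (hall : HallUpTo T 4) {i : ι} (h2 : #(T i) = 2)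
    (hA : (T i ∩ singletonRows T).Nonempty) : #(T i \ singletonRows T) = 1 := by
  have := card_inter_singletonRows_lt hall h2.ge (by omega)
  have := card_inter_add_card_sdiff (T i) (singletonRows T)
  have := hA.card_pos
  omega

/-- Two columns of size `2` meeting `singletonRows T` outside the same row would, together
with the singleton columns over their other rows, violate Hall's condition. -/
lemma disjoint_sdiff_singletonRows (hall : HallUpTo T 4) {i j : ι} (hij : i ≠ j)
    (hi : #(T i) = 2) (hj : #(T j) = 2) (hiA : (T i ∩ singletonRows T).Nonempty)
    (hjA : (T j ∩ singletonRows T).Nonempty) :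
    Disjoint (T i \ singletonRows T) (T j \ singletonRows T) := by
  classical
  refine disjoint_left.mpr fun t hti htj => ?_
  have hrest : ∀ l, #(T l) = 2 → (T l ∩ singletonRows T).Nonempty → t ∈ T l \ singletonRows T →
      T l ⊆ insert t (T l ∩ singletonRows T) := fun l hl hlA htl x hx => by
    by_cases hxA : x ∈ singletonRows T
    · exact mem_insert_of_mem (mem_inter.mpr ⟨hx, hxA⟩)
    · exact mem_insert.mpr (Or.inl (card_le_one.mp
        (card_sdiff_singletonRows_eq_one hall hl hlA).le x (mem_sdiff.mpr ⟨hx, hxA⟩) t htl))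
  have hS : #(T i ∩ singletonRows T ∪ T j ∩ singletonRows T) ≤ 2 := by
    have := card_union_le (T i ∩ singletonRows T) (T j ∩ singletonRows T)
    have := card_inter_singletonRows_lt hall hi.ge (by omega)
    have := card_inter_singletonRows_lt hall hj.ge (by omega)
    omega
  set S := T i ∩ singletonRows T ∪ T j ∩ singletonRows T
  have hsub : ({i, j} : Finset ι).biUnion T ∪ S ⊆ insert t S := by
    refine union_subset (biUnion_subset.mpr fun l hl => ?_) (subset_insert _ _)
    rcases mem_insert.mp hl with rfl | hl
    · exact (hrest l hi hiA hti).trans (insert_subset_insert _ subset_union_left)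
    · rw [mem_singleton.mp hl]
      exact (hrest j hj hjA htj).trans (insert_subset_insert _ subset_union_right)
  have hHall := hall.card_add_card_le (by norm_num) (D := {i, j}) (S := S) (by simp [hi, hj])
    (union_subset inter_subset_right inter_subset_right) (by rw [card_pair hij]; omega)
  have := (card_le_card hsub).trans (card_insert_le _ _)
  rw [card_pair hij] at hHall
  omega

lemma card_pairCols_le (hall : HallUpTo T 4) {V : Finset R} (hTV : ∀ i, T i ⊆ V) :
    #{i | #(T i) = 2 ∧ (T i ∩ singletonRows T).Nonempty} ≤ #(V \ singletonRows T) := by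
  set W := ({i | #(T i) = 2 ∧ (T i ∩ singletonRows T).Nonempty} : Finset ι)
  have hdisj : (W : Set ι).PairwiseDisjoint fun i => T i \ singletonRows T :=
    fun i hi j hj hij => by
      simp only [W, mem_coe, mem_filter, mem_univ, true_and] at hi hj
      exact disjoint_sdiff_singletonRows hall hij hi.1 hj.1 hi.2 hj.2
  calc #W = ∑ i ∈ W, #(T i \ singletonRows T) := by
        rw [card_eq_sum_ones]
        refine sum_congr rfl fun i hi => ?_
        simp only [W, mem_filter, mem_univ, true_and] at hi
        exact (card_sdiff_singletonRows_eq_one hall hi.1 hi.2).symm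
    _ = #(W.biUnion fun i => T i \ singletonRows T) := (card_biUnion hdisj).symm
    _ ≤ #(V \ singletonRows T) :=
        card_le_card (biUnion_subset.mpr fun i _ => sdiff_subset_sdiff (hTV i) subset_rfl)

lemma card_inter_singletonRows_le (hall : HallUpTo T 4) (i : ι) :
    #(T i ∩ singletonRows T) ≤ (if #(T i) = 1 then 1 else 0) +
      (if #(T i) = 2 ∧ (T i ∩ singletonRows T).Nonempty then 1 else 0) + 2 * (#(T i) - 2) := by
  have hle : #(T i ∩ singletonRows T) ≤ #(T i) := card_le_card inter_subset_left
  have hlt : 2 ≤ #(T i) → #(T i) ≤ 3 → #(T i ∩ singletonRows T) < #(T i) :=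
    card_inter_singletonRows_lt hall
  by_cases h2 : #(T i) = 2
  · have := hlt h2.ge (by omega)
    rw [if_neg (by omega)]
    by_cases hA : (T i ∩ singletonRows T).Nonempty
    · rw [if_pos ⟨h2, hA⟩]
      omega
    · simp [not_nonempty_iff_eq_empty.mp hA]
  · have : #(T i) = 3 → #(T i ∩ singletonRows T) ≤ 2 := by
      intro h3
      have := hlt (by omega) (by omega)
      omega
    simp only [h2, false_and, if_false]
    split_ifs <;> omega

lemma sum_card_inter_singletonRows_le (hall : HallUpTo T 4) {V : Finset R}
    (hTV : ∀ i, T i ⊆ V) : ∑ i, #(T i ∩ singletonRows T) ≤ #V + 2 * ∑ i, (#(T i) - 2) := by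
  have hAV : singletonRows T ⊆ V := biUnion_subset.mpr fun i _ => hTV i
  calc ∑ i, #(T i ∩ singletonRows T)
      ≤ ∑ i, ((if #(T i) = 1 then 1 else 0) +
          (if #(T i) = 2 ∧ (T i ∩ singletonRows T).Nonempty then 1 else 0) +
          2 * (#(T i) - 2)) := sum_le_sum fun i _ => card_inter_singletonRows_le hall i
    _ = #(singletonCols T) + #{i | #(T i) = 2 ∧ (T i ∩ singletonRows T).Nonempty} +
          2 * ∑ i, (#(T i) - 2) := by
        rw [sum_add_distrib, sum_add_distrib, ← mul_sum, ← card_filter, ← card_filter]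
        rfl
    _ ≤ #(singletonRows T) + #(V \ singletonRows T) + 2 * ∑ i, (#(T i) - 2) := by
        rw [singletonRows, card_biUnion_of_subset_singletonCols (hall.mono (by norm_num))
          subset_rfl]
        gcongr
        exact card_pairCols_le hall hTV
    _ = #V + 2 * ∑ i, (#(T i) - 2) := by
        rw [add_comm #(singletonRows T), card_sdiff_add_card_eq_card hAV]

theorem two_mul_card_mul_le (hall : HallUpTo T 4) {V : Finset R} {r : ℕ} (hr : 1 ≤ r)
    (hTV : ∀ i, T i ⊆ V) (hdeg : ∀ s ∈ V, #{i | s ∈ T i} ≤ r + 1) :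
    2 * Fintype.card ι * (r + 1) ≤ #V * ((r + 1) ^ 2 + 1) := by
  set A := singletonRows T
  have hAV : A ⊆ V := biUnion_subset.mpr fun i _ => hTV i
  have hcols := sum_card_add_card_singletonCols (hall.mono (by norm_num))
  have hsingle : #(singletonCols T) = #A :=
    (card_biUnion_of_subset_singletonCols (hall.mono (by norm_num)) subset_rfl).symm
  have hdegA : ∑ s ∈ A, #{i | s ∈ T i} ≤ #V + 2 * ∑ i, (#(T i) - 2) :=
    (sum_card_filter_mem_eq_sum_card_inter T A).trans_le
      (sum_card_inter_singletonRows_le hall hTV)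
  have hdegA' : ∑ s ∈ A, #{i | s ∈ T i} ≤ #A * (r + 1) :=
    sum_le_card_nsmul _ _ _ fun s hs => hdeg s (hAV hs)
  have hdegVA : ∑ s ∈ V \ A, #{i | s ∈ T i} ≤ #(V \ A) * (r + 1) :=
    sum_le_card_nsmul _ _ _ fun s hs => hdeg s (mem_sdiff.mp hs).1
  have hincid : ∑ i, #(T i) = ∑ s ∈ V \ A, #{i | s ∈ T i} + ∑ s ∈ A, #{i | s ∈ T i} := by
    rw [sum_sdiff hAV, sum_card_filter_mem_eq_sum_card_inter]
    exact sum_congr rfl fun i _ => by rw [inter_eq_left.mpr (hTV i)]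
  have hV : #V = #(V \ A) + #A := (card_sdiff_add_card_eq_card hAV).symm
  rw [hV] at hdegA ⊢
  rw [hsingle] at hcols
  -- `(r + 1) deg s ≤ deg s + r (r + 1)` on `A` and `≤ (r + 1)²` off `A`
  nlinarith [congrArg (· * (r + 1)) hcols, congrArg (· * (r + 1)) hincid,
    Nat.mul_le_mul_left r hdegA', Nat.mul_le_mul_left (r + 1) hdegVA,
    Nat.mul_le_mul_right (∑ i, (#(T i) - 2)) hr]

end HallUpTo
end Hall

lemma card_le_card_biUnion_of_forall_sum_mul_eq_zero {ι F : Type*} [Field F] [DecidableEq F]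
    [DecidableEq (ι → F)] (V : Finset (ι → F)) (E : Finset ι)
    (hE : ∀ a : ι → F, (∀ v ∈ V, ∑ i ∈ E, a i * v i = 0) → ∀ i ∈ E, a i = 0) :
    #E ≤ #(E.biUnion fun i => {v ∈ V | v i ≠ 0}) := by
  set U := E.biUnion fun i => {v ∈ V | v i ≠ 0}
  have hli : LinearIndependent F fun (i : E) (u : U) => (u : ι → F) i := by
    refine Fintype.linearIndependent_iff.mpr fun g hg i => ?_
    classical
    let a : ι → F := fun i => if h : i ∈ E then g ⟨i, h⟩ else 0
    suffices ∀ v ∈ V, ∑ i ∈ E, a i * v i = 0 by simpa [a] using hE a this i i.2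
    intro v hv
    by_cases hvU : v ∈ U
    · have := congrFun hg ⟨v, hvU⟩
      simp only [Finset.sum_apply, Pi.smul_apply, smul_eq_mul, Pi.zero_apply] at this
      rw [← sum_coe_sort]
      simpa [a] using this
    · refine sum_eq_zero fun i hi => ?_
      have : v i = 0 := by
        by_contra hvi
        exact hvU (mem_biUnion.mpr ⟨i, hi, mem_filter.mpr ⟨hv, hvi⟩⟩)
      simp [this]
  simpa using hli.fintype_card_le_finrank

section Code

variable {n : ℕ} {F : Type*} [Field F] [DecidableEq F]

def localParities (C : Submodule F (Fin n → F)) (r : ℕ) : Set (Fin n → F) :=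
  {h | (∀ c ∈ C, ∑ i, h i * c i = 0) ∧ wt h ≤ r + 1}

/-- The erasures are repaired in the order `σ`; the repair parity of the `j`-th erasure vanishes
on the later ones, so by induction `a` vanishes on the earlier ones. -/
lemma SeqRecov.eq_zero_of_forall_sum_mul_eq_zero {C : Submodule F (Fin n → F)} {r t : ℕ}
    (hseq : SeqRecov C r t) {E : Finset (Fin n)} (hE : #E ≤ t) {a : Fin n → F}
    (ha : ∀ h ∈ localParities C r, ∑ i ∈ E, a i * h i = 0) : ∀ i ∈ E, a i = 0 := by
  obtain ⟨σ, hnodup, rfl, hrepair⟩ := hseq E hE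
  have key : ∀ j : Fin σ.length, a (σ.get j) = 0 := by
    intro j
    induction j using WellFoundedLT.induction with
    | _ j ih =>
    obtain ⟨h, hdual, hwt, hj, hlater⟩ := hrepair j
    have hsum := ha h ⟨hdual, hwt⟩
    rw [List.sum_toFinset _ hnodup, ← Fin.sum_univ_fun_getElem, sum_eq_single j] at hsum
    · exact (mul_eq_zero.mp hsum).resolve_right hj
    · intro k _ hkj
      rcases lt_or_gt_of_ne hkj with hlt | hgt
      · simp [← List.get_eq_getElem, ih k hlt]
      · simp [← List.get_eq_getElem, hlater k hgt]
    · simp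
  intro i hi
  obtain ⟨j, rfl⟩ := List.mem_iff_get.mp (List.mem_toFinset.mp hi)
  exact key j

lemma SeqRecov.hallUpTo {C : Submodule F (Fin n → F)} {r t : ℕ} (hseq : SeqRecov C r t)
    (V : Finset (Fin n → F)) (hV : localParities C r ⊆ Submodule.span F (V : Set (Fin n → F))) :
    HallUpTo (fun i => {v ∈ V | v i ≠ 0}) t := by
  refine fun E hE => card_le_card_biUnion_of_forall_sum_mul_eq_zero V E fun a ha =>
    hseq.eq_zero_of_forall_sum_mul_eq_zero hE fun h hh => ?_
  let L : (Fin n → F) →ₗ[F] F := ∑ i ∈ E, a i • LinearMap.proj i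
  have : Submodule.span F (V : Set (Fin n → F)) ≤ LinearMap.ker L := by
    rw [Submodule.span_le]
    intro v hv
    simpa [L] using ha v hv
  simpa [L] using this (hV hh)

end Code

/-- Let `C` be an `(n,k,r,4)_seq` code, `B₀` the span of all dual codewords of weight
`≤ r+1`, and `m = dim B₀`. Then `3n ≤ m(3r/2 + 2 - (r-2)/(2(r+1)))`. -/
theorem local_parity_dim_bound {n r : ℕ} {F : Type*} [Field F] [DecidableEq F]
    (hr : 1 ≤ r) (C : Submodule F (Fin n → F)) (hseq : SeqRecov C r 4)
    (B₀ : Submodule F (Fin n → F))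
    (hB₀ : B₀ = Submodule.span F {h : Fin n → F |
      (∀ c ∈ C, ∑ i, h i * c i = 0) ∧ wt h ≤ r + 1})
    (m : ℕ) (hm : m = Module.finrank F B₀) :
    3 * (n : ℚ) ≤ (m : ℚ) *
      (3 * (r : ℚ) / 2 + 2 - ((r : ℚ) - 2) / (2 * ((r : ℚ) + 1))) := by
  obtain ⟨b, hbS, hbspan, hbind⟩ := exists_linearIndependent F (localParities C r)
  have : Fintype b := (Set.finite_coe_iff.mp hbind.finite).fintype
  have hmb : m = #b.toFinset := by
    rw [hm, hB₀, ← finrank_span_set_eq_card hbind, hbspan]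
    rfl
  have hall := hseq.hallUpTo b.toFinset (by
    rw [Set.coe_toFinset, hbspan]
    exact Submodule.subset_span)
  have hbound := HallUpTo.two_mul_card_mul_le hall hr (fun i => filter_subset _ _) fun s hs => by
    simpa [wt, hs] using (hbS (Set.mem_toFinset.mp hs)).2
  rw [Fintype.card_fin, ← hmb] at hbound
  have hcoeff : 3 * (r : ℚ) / 2 + 2 - ((r : ℚ) - 2) / (2 * ((r : ℚ) + 1)) =
      3 * (((r : ℚ) + 1) ^ 2 + 1) / (2 * ((r : ℚ) + 1)) := by
    field_simp
    ring
  rw [hcoeff, ← mul_div_assoc, le_div_iff₀ (by positivity)]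
  have : (2 * n * (r + 1) : ℚ) ≤ m * ((r + 1) ^ 2 + 1) := by exact_mod_cast hbound
  linarith
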